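/- Projective Van Aubel theorem: let XYZ be a projective triangle, X₁ ∈ YZ, Y₁ ∈ ZX, Z₁ ∈ XY with XX₁, YY₁, ZZ₁ concurrent at Q. Let r be a line through none of X, Y, Z, and set X₂ = r∩XX₁, Y₀ = r∩XZ, Z₀ = r∩XY. Then (X X₁ Q X₂) = (X Y Z₁ Z₀) + (X Z Y₁ Y₀). -/
import Mathlib


open Matrix

/-- Points (and, dually, lines) of the real projective plane are represented by
nonzero vectors of `ℝ³`; `dot3` is the incidence pairing. -/
def dot3 (u v : Fin 3 → ℝ) : ℝ := u 0 * v 0 + u 1 * v 1 + u 2 * v 2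

/-- The (projective points represented by) three vectors are collinear: some nonzero
line form vanishes on all of them. -/
def Coll (a b c : Fin 3 → ℝ) : Prop :=
  ∃ l : Fin 3 → ℝ, l ≠ 0 ∧ dot3 l a = 0 ∧ dot3 l b = 0 ∧ dot3 l c = 0

/-- `CRv a b c d k`: the cross ratio `(abcd)` of four collinear projective points
(represented by the given vectors) equals `k`.  Writing `c = x•a + y•b` and
`d = z•a + w•b`, the cross ratio is `(y/x)/(w/z) = (y*z)/(x*w)`; this value is
independent of the chosen representative vectors. -/
def CRv (a b c d : Fin 3 → ℝ) (k : ℝ) : Prop :=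
  ∃ x y z w : ℝ, c = x • a + y • b ∧ d = z • a + w • b ∧ x * w ≠ 0 ∧
    k = (y * z) / (x * w)

lemma dot3_comb2 (l u v : Fin 3 → ℝ) (a b : ℝ) :
    dot3 l (a • u + b • v) = a * dot3 l u + b * dot3 l v := by
  simp [dot3, Pi.add_apply, Pi.smul_apply, smul_eq_mul]; ring

lemma dot3_comb3 (l u v w : Fin 3 → ℝ) (a b c : ℝ) :
    dot3 l (a • u + b • v + c • w) = a * dot3 l u + b * dot3 l v + c * dot3 l w := by
  simp [dot3, Pi.add_apply, Pi.smul_apply, smul_eq_mul]; ring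

def M3 (X Y Z : Fin 3 → ℝ) : Matrix (Fin 3) (Fin 3) ℝ := Matrix.of ![X, Y, Z]

lemma det_ne (X Y Z : Fin 3 → ℝ) (h : ¬Coll X Y Z) : (M3 X Y Z).det ≠ 0 := by
  intro hd
  obtain ⟨v, hv, hMv⟩ := (Matrix.exists_mulVec_eq_zero_iff).mpr hd
  refine h ⟨v, hv, ?_, ?_, ?_⟩ <;>
  · have h0 := congrFun hMv 0
    have h1 := congrFun hMv 1
    have h2 := congrFun hMv 2
    simp [M3, Matrix.mulVec, dotProduct, Fin.sum_univ_three] at h0 h1 h2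
    simp [dot3]
    linarith

lemma indep3 (X Y Z : Fin 3 → ℝ) (h : ¬Coll X Y Z) (a b c : ℝ)
    (hab : a • X + b • Y + c • Z = 0) : a = 0 ∧ b = 0 ∧ c = 0 := by
  have hd : ((M3 X Y Z)ᵀ).det ≠ 0 := by rw [Matrix.det_transpose]; exact det_ne X Y Z h
  have hv : (M3 X Y Z)ᵀ *ᵥ ![a, b, c] = 0 := by
    funext i
    have := congrFun hab i
    simp only [Pi.add_apply, Pi.smul_apply, smul_eq_mul, Pi.zero_apply] at this
    simp [M3, Matrix.mulVec, dotProduct, Fin.sum_univ_three, Matrix.transpose_apply]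
    linarith
  by_contra hc
  have hne : ![a, b, c] ≠ 0 := by
    intro h0
    apply hc
    refine ⟨?_, ?_, ?_⟩
    · simpa using congrFun h0 0
    · simpa using congrFun h0 1
    · simpa using congrFun h0 2
  exact hd (Matrix.exists_mulVec_eq_zero_iff.mp ⟨![a, b, c], hne, hv⟩)

lemma decompose3 (X Y Z : Fin 3 → ℝ) (h : ¬Coll X Y Z) (v : Fin 3 → ℝ) :
    ∃ a b c : ℝ, v = a • X + b • Y + c • Z := by
  have hd : IsUnit ((M3 X Y Z)ᵀ).det := by
    rw [Matrix.det_transpose]; exact (det_ne X Y Z h).isUnit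
  set N := (M3 X Y Z)ᵀ with hN
  set W := N⁻¹ *ᵥ v with hW
  refine ⟨W 0, W 1, W 2, ?_⟩
  have key : N *ᵥ W = v := by
    rw [hW, Matrix.mulVec_mulVec, Matrix.mul_nonsing_inv _ hd, Matrix.one_mulVec]
  funext i
  have := congrFun key i
  simp only [hN, M3, Matrix.mulVec, dotProduct, Fin.sum_univ_three,
    Matrix.transpose_apply, Matrix.of_apply] at this
  simp only [Pi.add_apply, Pi.smul_apply, smul_eq_mul]
  simp at this ⊢
  linarith

/-- Projective Van Aubel theorem on cevians: let `XYZ` be a projective triangle with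
cevians `XX₁`, `YY₁`, `ZZ₁` concurrent at `Q`, and let `r` be a line through none of the
vertices, with `X₂ = r∩XX₁`, `Y₀ = r∩XZ`, `Z₀ = r∩XY`.  Then
`(X X₁ Q X₂) = (X Y Z₁ Z₀) + (X Z Y₁ Y₀)`. -/
theorem van_aubel_projective (X Y Z X1 Y1 Z1 Q r X2 Y0 Z0 : Fin 3 → ℝ)
    (hXYZ : ¬Coll X Y Z)
    (hX1 : X1 ≠ 0) (hX1l : Coll Y Z X1)
    (hX1Y : ∀ t : ℝ, X1 ≠ t • Y) (hX1Z : ∀ t : ℝ, X1 ≠ t • Z)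
    (hY1 : Y1 ≠ 0) (hY1l : Coll Z X Y1)
    (hY1Z : ∀ t : ℝ, Y1 ≠ t • Z) (hY1X : ∀ t : ℝ, Y1 ≠ t • X)
    (hZ1 : Z1 ≠ 0) (hZ1l : Coll X Y Z1)
    (hZ1X : ∀ t : ℝ, Z1 ≠ t • X) (hZ1Y : ∀ t : ℝ, Z1 ≠ t • Y)
    (hQ : Q ≠ 0) (hQ1 : Coll X X1 Q) (hQ2 : Coll Y Y1 Q) (hQ3 : Coll Z Z1 Q)
    (hQX : ∀ t : ℝ, Q ≠ t • X) (hQY : ∀ t : ℝ, Q ≠ t • Y) (hQZ : ∀ t : ℝ, Q ≠ t • Z)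
    (hrX : dot3 r X ≠ 0) (hrY : dot3 r Y ≠ 0) (hrZ : dot3 r Z ≠ 0)
    (hX2 : X2 ≠ 0) (hX2l : Coll X X1 X2) (hX2r : dot3 r X2 = 0)
    (hY0 : Y0 ≠ 0) (hY0l : Coll X Z Y0) (hY0r : dot3 r Y0 = 0)
    (hZ0 : Z0 ≠ 0) (hZ0l : Coll X Y Z0) (hZ0r : dot3 r Z0 = 0) :
    ∀ k1 k2 k3 : ℝ, CRv X X1 Q X2 k1 → CRv X Y Z1 Z0 k2 → CRv X Z Y1 Y0 k3 →
      k1 = k2 + k3 := by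
  intro k1 k2 k3 hk1 hk2 hk3
  obtain ⟨x, y, z, w, hQxy, hX2e, hxw, hk1e⟩ := hk1
  obtain ⟨x2, y2, z2, w2, hZ1e, hZ0e, hx2w2, hk2e⟩ := hk2
  obtain ⟨x3, y3, z3, w3, hY1e, hY0e, hx3w3, hk3e⟩ := hk3
  obtain ⟨qx, qy, qz, hQe⟩ := decompose3 X Y Z hXYZ Q
  obtain ⟨a1, b1, c1, hX1e⟩ := decompose3 X Y Z hXYZ X1
  -- a1 = 0 : X1 lies on YZ
  obtain ⟨l1, hl1ne, hl1Y, hl1Z, hl1X1⟩ := hX1l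
  have hl1X : dot3 l1 X ≠ 0 := fun hh => hXYZ ⟨l1, hl1ne, hh, hl1Y, hl1Z⟩
  have ha1 : a1 = 0 := by
    rw [hX1e, dot3_comb3, hl1Y, hl1Z] at hl1X1
    have : a1 * dot3 l1 X = 0 := by linarith
    exact (mul_eq_zero.mp this).resolve_right hl1X
  have hX1e' : X1 = b1 • Y + c1 • Z := by rw [hX1e, ha1, zero_smul, zero_add]
  -- matching coordinates of Q
  have hmatch : (x - qx) • X + (y * b1 - qy) • Y + (y * c1 - qz) • Z = 0 := by
    have h2 := hQe.symm.trans hQxy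
    rw [hX1e'] at h2
    funext i
    have := congrFun h2 i
    simp only [Pi.add_apply, Pi.smul_apply, smul_eq_mul, Pi.zero_apply] at this ⊢
    ring_nf
    ring_nf at this
    linarith
  obtain ⟨hx, hyb, hyc⟩ := indep3 X Y Z hXYZ _ _ _ hmatch
  -- relation from Coll Z Z1 Q
  obtain ⟨l3, hl3ne, hl3Z, hl3Z1, hl3Q⟩ := hQ3
  have e1 : x2 * dot3 l3 X + y2 * dot3 l3 Y = 0 := by
    rw [hZ1e, dot3_comb2] at hl3Z1; exact hl3Z1
  have e2 : qx * dot3 l3 X + qy * dot3 l3 Y = 0 := by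
    rw [hQe, dot3_comb3, hl3Z] at hl3Q; linarith
  have rel2 : x2 * qy = y2 * qx := by
    rcases eq_or_ne (dot3 l3 X) 0 with hlx | hlx
    · have hly : dot3 l3 Y ≠ 0 := fun hy => hXYZ ⟨l3, hl3ne, hlx, hy, hl3Z⟩
      have hy2 : y2 = 0 := by
        have : y2 * dot3 l3 Y = 0 := by rw [hlx] at e1; linarith
        exact (mul_eq_zero.mp this).resolve_right hly
      have hqy : qy = 0 := by
        have : qy * dot3 l3 Y = 0 := by rw [hlx] at e2; linarith
        exact (mul_eq_zero.mp this).resolve_right hly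
      rw [hy2, hqy]; ring
    · have key : (x2 * qy - y2 * qx) * dot3 l3 X = 0 := by
        linear_combination qy * e1 - y2 * e2
      have := (mul_eq_zero.mp key).resolve_right hlx
      linarith
  -- relation from Coll Y Y1 Q
  obtain ⟨l2, hl2ne, hl2Y, hl2Y1, hl2Q⟩ := hQ2
  have e1' : x3 * dot3 l2 X + y3 * dot3 l2 Z = 0 := by
    rw [hY1e, dot3_comb2] at hl2Y1; exact hl2Y1
  have e2' : qx * dot3 l2 X + qz * dot3 l2 Z = 0 := by
    rw [hQe, dot3_comb3, hl2Y] at hl2Q; linarith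
  have rel3 : x3 * qz = y3 * qx := by
    rcases eq_or_ne (dot3 l2 X) 0 with hlx | hlx
    · have hlz : dot3 l2 Z ≠ 0 := fun hz => hXYZ ⟨l2, hl2ne, hlx, hl2Y, hz⟩
      have hy3 : y3 = 0 := by
        have : y3 * dot3 l2 Z = 0 := by rw [hlx] at e1'; linarith
        exact (mul_eq_zero.mp this).resolve_right hlz
      have hqz : qz = 0 := by
        have : qz * dot3 l2 Z = 0 := by rw [hlx] at e2'; linarith
        exact (mul_eq_zero.mp this).resolve_right hlz
      rw [hy3, hqz]; ring
    · have key : (x3 * qz - y3 * qx) * dot3 l2 X = 0 := by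
        linear_combination qz * e1' - y3 * e2'
      have := (mul_eq_zero.mp key).resolve_right hlx
      linarith
  -- qx ≠ 0
  have hx3 : x3 ≠ 0 := left_ne_zero_of_mul hx3w3
  have hqx : qx ≠ 0 := by
    intro h0
    rcases eq_or_ne qz 0 with hqz | hqz
    · exact hQY qy (by rw [hQe, h0, hqz, zero_smul, zero_smul, zero_add, add_zero])
    · have hlz : dot3 l2 Z = 0 := by
        have : qz * dot3 l2 Z = 0 := by rw [h0] at e2'; linarith
        exact (mul_eq_zero.mp this).resolve_left hqz
      have hlx : dot3 l2 X = 0 := by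
        have : x3 * dot3 l2 X = 0 := by rw [hlz] at e1'; linarith
        exact (mul_eq_zero.mp this).resolve_left hx3
      exact hXYZ ⟨l2, hl2ne, hlx, hl2Y, hlz⟩
  -- r-pairing equations
  have r1 : z * dot3 r X + w * (b1 * dot3 r Y + c1 * dot3 r Z) = 0 := by
    rw [hX2e, dot3_comb2, hX1e', dot3_comb2] at hX2r; linarith
  have r2 : z2 * dot3 r X + w2 * dot3 r Y = 0 := by
    rw [hZ0e, dot3_comb2] at hZ0r; exact hZ0r
  have r3 : z3 * dot3 r X + w3 * dot3 r Z = 0 := by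
    rw [hY0e, dot3_comb2] at hY0r; exact hY0r
  -- cross-ratio values
  have hk1' : k1 * (x * w) = y * z := by rw [hk1e]; exact div_mul_cancel₀ _ hxw
  have hk2' : k2 * (x2 * w2) = y2 * z2 := by rw [hk2e]; exact div_mul_cancel₀ _ hx2w2
  have hk3' : k3 * (x3 * w3) = y3 * z3 := by rw [hk3e]; exact div_mul_cancel₀ _ hx3w3
  set rX := dot3 r X
  set rY := dot3 r Y
  set rZ := dot3 r Z
  have E1 : k1 * (qx * rX) * (x * w) = -(qy * rY + qz * rZ) * (x * w) := by
    linear_combination (qx * rX) * hk1' + (y * qx) * r1 + (w * (qy * rY + qz * rZ)) * hx -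
      (qx * w * rY) * hyb - (qx * w * rZ) * hyc
  have E1' : k1 * (qx * rX) = -(qy * rY + qz * rZ) := mul_right_cancel₀ hxw E1
  have E2 : k2 * (qx * rX) * (x2 * w2) = -(qy * rY) * (x2 * w2) := by
    linear_combination (qx * rX) * hk2' + (y2 * qx) * r2 + (w2 * rY) * rel2
  have E2' : k2 * (qx * rX) = -(qy * rY) := mul_right_cancel₀ hx2w2 E2
  have E3 : k3 * (qx * rX) * (x3 * w3) = -(qz * rZ) * (x3 * w3) := by
    linear_combination (qx * rX) * hk3' + (y3 * qx) * r3 + (w3 * rZ) * rel3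
  have E3' : k3 * (qx * rX) = -(qz * rZ) := mul_right_cancel₀ hx3w3 E3
  have hqxrX : qx * rX ≠ 0 := mul_ne_zero hqx hrX
  exact mul_right_cancel₀ hqxrX (by linear_combination E1' - E2' - E3')
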